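/- Let R be a commutative ring with unity, let G be a group lying in Strebel's class D(R), and let f : M → N be a homomorphism of left RG-modules with N projective. Then for every index set I the following holds: if there is an injective R-module homomorphism from the free R-module R^{(I)} (finitely supported functions I → R) into the image of the induced map R ⊗_{RG} M → R ⊗_{RG} N, then there is an injective RG-module homomorphism from the free RG-module (RG)^{(I)} into the image of f. In other words, the maximal rank of free RG-submodules of Im f is greater than or equal to the maximal rank of free R-submodules of Im(1_R ⊗ f). -/

import Mathlib

universe u v w

/-- The submodule of a module `M` over the group ring `RG` generated by the
elements `g • m - m`; the quotient `M ⧸ coinvKer R G M` is the module of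
`G`-coinvariants `R ⊗_{RG} M`. -/
noncomputable def coinvKer (R : Type w) [CommRing R] (G : Type u) [Group G]
    (M : Type v) [AddCommGroup M] [Module (MonoidAlgebra R G) M] :
    Submodule (MonoidAlgebra R G) M :=
  Submodule.span (MonoidAlgebra R G)
    {x | ∃ (g : G) (m : M), x = (MonoidAlgebra.of R G g) • m - m}

/-- Strebel's class `D(R)`: a homomorphism `f : P → Q` of projective `RG`-modules
is injective whenever the induced map `R ⊗_{RG} P → R ⊗_{RG} Q` on coinvariants
is injective. -/
def InStrebelD (R : Type w) [CommRing R] (G : Type u) [Group G] : Prop :=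
  ∀ (P Q : Type (max u w)) [AddCommGroup P] [AddCommGroup Q]
    [Module (MonoidAlgebra R G) P] [Module (MonoidAlgebra R G) Q],
    Module.Projective (MonoidAlgebra R G) P →
    Module.Projective (MonoidAlgebra R G) Q →
    ∀ f : P →ₗ[MonoidAlgebra R G] Q,
      (∀ x : P, f x ∈ coinvKer R G Q → x ∈ coinvKer R G P) →
      Function.Injective f

/-!
Lift the basis images `φ (single i 1)` to elements `f (m i)` of the image of `f`, and let
`ψ : (RG)^{(I)} → N` send the basis to them. Under `R ⊗_{RG} (RG)^{(I)} ≅ R^{(I)}`, given by the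
augmentation, `1 ⊗ ψ` becomes `φ` and is therefore injective; as `(RG)^{(I)}` and `N` are
projective, `D(R)` makes `ψ` injective.
-/

noncomputable def augmentation (R : Type w) [CommRing R] (G : Type u) [Group G] :
    MonoidAlgebra R G →ₐ[R] R :=
  MonoidAlgebra.lift R R G 1

@[simp]
lemma augmentation_single (R : Type w) [CommRing R] (G : Type u) [Group G] (g : G) (r : R) :
    augmentation R G (MonoidAlgebra.single g r) = r := by
  simp [augmentation]

section Coinvariants

variable {R : Type w} [CommRing R] {G : Type u} [Group G]

lemma smul_sub_algebraMap_augmentation_smul_mem_coinvKer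
    {M : Type*} [AddCommGroup M] [Module (MonoidAlgebra R G) M]
    (a : MonoidAlgebra R G) (x : M) :
    a • x - algebraMap R (MonoidAlgebra R G) (augmentation R G a) • x ∈ coinvKer R G M := by
  induction a using MonoidAlgebra.induction_linear with
  | zero => simp
  | add a b ha hb =>
    convert add_mem ha hb using 1
    simp only [map_add, add_smul]
    abel
  | single g r =>
    rw [augmentation_single, MonoidAlgebra.single_eq_algebraMap_mul_of, mul_smul, ← smul_sub]
    exact Submodule.smul_mem _ _ (Submodule.subset_span ⟨g, x, rfl⟩)

variable {M : Type*} [AddCommGroup M] [Module (MonoidAlgebra R G) M] [Module R M]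
  [IsScalarTower R (MonoidAlgebra R G) M]

lemma mk_smul_eq_augmentation_smul (a : MonoidAlgebra R G) (x : M) :
    (Submodule.Quotient.mk (a • x) : M ⧸ coinvKer R G M) =
      augmentation R G a • Submodule.Quotient.mk x := by
  rw [← Submodule.Quotient.mk_smul, Submodule.Quotient.eq, ← algebraMap_smul (MonoidAlgebra R G)]
  exact smul_sub_algebraMap_augmentation_smul_mem_coinvKer a x

lemma mk_linearCombination_eq_augmentation {ι : Type*} (v : ι → M)
    (y : ι →₀ MonoidAlgebra R G) :
    (Submodule.Quotient.mk (Finsupp.linearCombination (MonoidAlgebra R G) v y) :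
        M ⧸ coinvKer R G M) =
      Finsupp.linearCombination R (fun i => Submodule.Quotient.mk (v i))
        (Finsupp.mapRange.linearMap (augmentation R G).toLinearMap y) := by
  induction y using Finsupp.induction_linear with
  | zero => simp
  | add y z hy hz => simp only [map_add, Submodule.Quotient.mk_add, hy, hz]
  | single i a =>
    rw [Finsupp.linearCombination_single, mk_smul_eq_augmentation_smul]
    simp

lemma mem_coinvKer_of_augmentation_eq_zero {ι : Type*} (y : ι →₀ MonoidAlgebra R G)
    (hy : Finsupp.mapRange.linearMap (augmentation R G).toLinearMap y = 0) :
    y ∈ coinvKer R G (ι →₀ MonoidAlgebra R G) := by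
  rw [← Submodule.Quotient.mk_eq_zero, ← Finsupp.basisSingleOne.linearCombination_repr y]
  simpa [hy] using mk_linearCombination_eq_augmentation Finsupp.basisSingleOne y

end Coinvariants

section StrebelD

variable {R : Type w} [CommRing R] {G : Type u} [Group G]
  {N : Type (max u w)} [AddCommGroup N] [Module (MonoidAlgebra R G) N] [Module R N]
  [IsScalarTower R (MonoidAlgebra R G) N]

lemma InStrebelD.linearIndependent_of_mk' (hG : InStrebelD R G)
    (hN : Module.Projective (MonoidAlgebra R G) N) {ι : Type (max u w)} {v : ι → N}
    (hv : LinearIndependent R fun i => (Submodule.Quotient.mk (v i) : N ⧸ coinvKer R G N)) :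
    LinearIndependent (MonoidAlgebra R G) v := by
  refine hG _ N inferInstance hN _ fun y hy => mem_coinvKer_of_augmentation_eq_zero y ?_
  rw [← Submodule.Quotient.mk_eq_zero, mk_linearCombination_eq_augmentation] at hy
  exact hv (hy.trans (map_zero _).symm)

/-- `InStrebelD R G` only speaks about modules in `Type (max u w)`, so the index type is first
reduced to its finite subfamilies, reindexed by `ULift (Fin n)`. -/
theorem InStrebelD.linearIndependent_of_mk (hG : InStrebelD R G)
    (hN : Module.Projective (MonoidAlgebra R G) N) {ι : Type*} {v : ι → N}
    (hv : LinearIndependent R fun i => (Submodule.Quotient.mk (v i) : N ⧸ coinvKer R G N)) :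
    LinearIndependent (MonoidAlgebra R G) v := by
  refine linearIndependent_iff_finset_linearIndependent.mpr fun s => ?_
  let e : ULift.{max u w} (Fin s.card) ≃ s := Equiv.ulift.trans s.equivFin.symm
  exact (linearIndependent_equiv e).mp <|
    hG.linearIndependent_of_mk' hN <| hv.comp _ (Subtype.val_injective.comp e.injective)

end StrebelD

/-- If `G` lies in Strebel's class `D(R)` and `f : M → N` is a homomorphism of
`RG`-modules with `N` projective, then for every index set `I`: if the free
`R`-module `R^{(I)}` embeds into the image of the induced map
`R ⊗_{RG} M → R ⊗_{RG} N` on coinvariants, then the free `RG`-module `(RG)^{(I)}`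
embeds into the image of `f`. -/
theorem free_rank_image_le_of_inStrebelD
    (R : Type w) [CommRing R] (G : Type u) [Group G]
    (hG : InStrebelD R G)
    (M N : Type (max u w)) [AddCommGroup M] [AddCommGroup N]
    [Module (MonoidAlgebra R G) M] [Module (MonoidAlgebra R G) N]
    [Module R M] [Module R N]
    [IsScalarTower R (MonoidAlgebra R G) M] [IsScalarTower R (MonoidAlgebra R G) N]
    (hN : Module.Projective (MonoidAlgebra R G) N)
    (f : M →ₗ[MonoidAlgebra R G] N)
    (I : Type v)
    (h : ∃ φ : (I →₀ R) →ₗ[R] (N ⧸ coinvKer R G N),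
        Function.Injective φ ∧
        LinearMap.range φ ≤ LinearMap.range
          ((((coinvKer R G N).mkQ).restrictScalars R).comp (f.restrictScalars R))) :
    ∃ ψ : (I →₀ MonoidAlgebra R G) →ₗ[MonoidAlgebra R G] N,
      Function.Injective ψ ∧ LinearMap.range ψ ≤ LinearMap.range f := by
  obtain ⟨φ, hφ, hφf⟩ := h
  choose m hm using fun i : I => hφf ⟨Finsupp.single i 1, rfl⟩
  have hv : LinearIndependent R
      fun i => (Submodule.Quotient.mk (f (m i)) : N ⧸ coinvKer R G N) := by
    have hφv : φ ∘ Finsupp.basisSingleOne (R := R) = fun i => Submodule.Quotient.mk (f (m i)) :=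
      funext fun i => (hm i).symm
    rw [← hφv]
    exact (Finsupp.basisSingleOne (R := R) (ι := I)).linearIndependent.map' φ
      (LinearMap.ker_eq_bot.mpr hφ)
  refine ⟨Finsupp.linearCombination _ (fun i => f (m i)), hG.linearIndependent_of_mk hN hv, ?_⟩
  rw [Finsupp.range_linearCombination, Submodule.span_le]
  rintro _ ⟨i, rfl⟩
  exact ⟨m i, rfl⟩
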